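/- arXiv:2305.17470 — 10 statements merged into one kernel-verified Lean document; each statement's English description precedes it below -/
import Mathlib

section
/- Let S, P1, P2 : ℝ → ℝ be differentiable functions satisfying, for all t ≥ 0, S'(t) = S(t)(1−S(t)) − S(t)P1(t) − S(t)P2(t), P1'(t) = A4·S(t)·P1(t)/(A1+P2(t)) − A2·P1(t)·P2(t) − A3·P1(t), and P2'(t) = A5·S(t)·P2(t) − A6·P1(t)·P2(t) − A7·P2(t) + A8·S(t)·P1(t)·P2(t), with A1 + P2(t) ≠ 0 for all t ≥ 0. If S(0) > 0, P1(0) > 0 and P2(0) > 0, then S(t) > 0, P1(t) > 0 and P2(t) > 0 for all t ≥ 0. -/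
open Set

/-- If `x' = g·x` on `[0,∞)` with `g` continuous there and `x 0 > 0`, then `x > 0` on `[0,∞)`. -/
lemma pos_of_linear_ode (x g : ℝ → ℝ) (hg : ContinuousOn g (Set.Ici 0))
    (hx : ∀ t, 0 ≤ t → HasDerivAt x (g t * x t) t) (h0 : 0 < x 0) :
    ∀ t, 0 ≤ t → 0 < x t := by
  set g' : ℝ → ℝ := fun t => g (max t 0) with hg'
  have hg'c : Continuous g' :=
    hg.comp_continuous (continuous_id.max continuous_const) (fun t => le_max_right t 0)
  set G : ℝ → ℝ := fun t => ∫ s in (0:ℝ)..t, g' s with hG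
  have hGd : ∀ t : ℝ, HasDerivAt G (g' t) t := fun t =>
    intervalIntegral.integral_hasDerivAt_right (hg'c.intervalIntegrable 0 t)
      hg'c.aestronglyMeasurable.stronglyMeasurableAtFilter hg'c.continuousAt
  set h : ℝ → ℝ := fun t => x t * Real.exp (-G t) with hh
  have hhd : ∀ s : ℝ, 0 ≤ s → HasDerivAt h 0 s := by
    intro s hs
    have hd := (hx s hs).mul (((hGd s).neg).exp)
    have hg's : g' s = g s := by simp [hg', max_eq_left hs]
    have : g s * x s * Real.exp (-G s) + x s * (Real.exp (-G s) * -g' s) = 0 := by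
      rw [hg's]; ring
    simp only [Pi.neg_apply] at hd; rw [this] at hd
    exact hd
  intro t ht
  have hconst : h t = h 0 := by
    apply constant_of_has_deriv_right_zero (f := h) (a := 0) (b := t)
    · intro s hs
      exact ((hx s hs.1).continuousAt.mul
        (Real.continuous_exp.continuousAt.comp ((hGd s).continuousAt.neg))).continuousWithinAt
    · intro s hs
      exact (hhd s hs.1).hasDerivWithinAt
    · exact ⟨ht, le_refl t⟩
  have h0' : 0 < h t := by
    rw [hconst]
    simp only [hh]
    have : G 0 = 0 := by simp [hG]
    rw [this]
    simpa using h0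
  have he := Real.exp_pos (-G t)
  simp only [hh] at h0'
  nlinarith [h0']

/-- Positivity of solutions of the nondimensionalized two-predator–one-prey
kleptoparasitism model (system (3)). -/
theorem positivity_system3
    (A1 A2 A3 A4 A5 A6 A7 A8 : ℝ)
    (hA1 : 0 < A1) (hA2 : 0 < A2) (hA3 : 0 < A3) (hA4 : 0 < A4)
    (hA5 : 0 < A5) (hA6 : 0 < A6) (hA7 : 0 < A7) (hA8 : 0 < A8)
    (S P1 P2 : ℝ → ℝ)
    (hS : ∀ t, 0 ≤ t →
      HasDerivAt S (S t * (1 - S t) - S t * P1 t - S t * P2 t) t)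
    (hP1 : ∀ t, 0 ≤ t →
      HasDerivAt P1 (A4 * S t * P1 t / (A1 + P2 t) - A2 * P1 t * P2 t - A3 * P1 t) t)
    (hP2 : ∀ t, 0 ≤ t →
      HasDerivAt P2 (A5 * S t * P2 t - A6 * P1 t * P2 t - A7 * P2 t
        + A8 * S t * P1 t * P2 t) t)
    (hne : ∀ t, 0 ≤ t → A1 + P2 t ≠ 0)
    (hS0 : 0 < S 0) (hP10 : 0 < P1 0) (hP20 : 0 < P2 0) :
    ∀ t, 0 ≤ t → 0 < S t ∧ 0 < P1 t ∧ 0 < P2 t := by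
  have hSc : ContinuousOn S (Set.Ici 0) := fun t ht => (hS t ht).continuousAt.continuousWithinAt
  have hP1c : ContinuousOn P1 (Set.Ici 0) := fun t ht => (hP1 t ht).continuousAt.continuousWithinAt
  have hP2c : ContinuousOn P2 (Set.Ici 0) := fun t ht => (hP2 t ht).continuousAt.continuousWithinAt
  have hSpos : ∀ t, 0 ≤ t → 0 < S t := by
    apply pos_of_linear_ode S (fun t => 1 - S t - P1 t - P2 t)
    · exact ((continuousOn_const.sub hSc).sub hP1c).sub hP2c
    · intro t ht
      have := hS t ht
      convert this using 1
      ring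
    · exact hS0
  have hP1pos : ∀ t, 0 ≤ t → 0 < P1 t := by
    apply pos_of_linear_ode P1 (fun t => A4 * S t / (A1 + P2 t) - A2 * P2 t - A3)
    · exact (((continuousOn_const.mul hSc).div (continuousOn_const.add hP2c)
        (fun t ht => hne t ht)).sub (continuousOn_const.mul hP2c)).sub continuousOn_const
    · intro t ht
      have := hP1 t ht
      convert this using 1
      have hnet := hne t ht
      field_simp
    · exact hP10
  have hP2pos : ∀ t, 0 ≤ t → 0 < P2 t := by
    apply pos_of_linear_ode P2
      (fun t => A5 * S t - A6 * P1 t - A7 + A8 * S t * P1 t)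
    · exact (((continuousOn_const.mul hSc).sub (continuousOn_const.mul hP1c)).sub
        continuousOn_const).add ((continuousOn_const.mul hSc).mul hP1c)
    · intro t ht
      have := hP2 t ht
      convert this using 1
      ring
    · exact hP20
  exact fun t ht => ⟨hSpos t ht, hP1pos t ht, hP2pos t ht⟩
end

section
/- Let S, P1, P2 : ℝ → ℝ be a solution of system (3) on [0,∞) with S(t) > 0, P1(t) > 0, P2(t) > 0 and S(t) ≤ 1 for all t ≥ 0, and suppose A1·A2/A4 + (A6−A8)/A5 ≥ 0. Define D(t) = S(t) + (A1/A4)·P1(t) + P2(t)/A5. Then for every φ with 0 < φ < min(A3, A7) and for all t ≥ 0, D(t) ≤ (1+φ)²/(4φ) + D(0)·e^{−φt}. In particular every such solution is bounded. -/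
set_option maxHeartbeats 1600000



/-- Boundedness of solutions of system (3): the weighted total population
`D = S + (A1/A4)·P1 + P2/A5` satisfies
`D(t) ≤ (1+φ)²/(4φ) + D(0)·e^{−φt}` for every `0 < φ < min(A3, A7)`;
in particular every such solution is bounded. -/
theorem solutions_bounded
    (A1 A2 A3 A4 A5 A6 A7 A8 : ℝ)
    (hA1 : 0 < A1) (hA2 : 0 < A2) (hA3 : 0 < A3) (hA4 : 0 < A4)
    (hA5 : 0 < A5) (hA6 : 0 < A6) (hA7 : 0 < A7) (hA8 : 0 < A8)
    (hsign : 0 ≤ A1 * A2 / A4 + (A6 - A8) / A5)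
    (S P1 P2 : ℝ → ℝ)
    (hS : ∀ t, 0 ≤ t →
      HasDerivAt S (S t * (1 - S t) - S t * P1 t - S t * P2 t) t)
    (hP1 : ∀ t, 0 ≤ t →
      HasDerivAt P1 (A4 * S t * P1 t / (A1 + P2 t) - A2 * P1 t * P2 t - A3 * P1 t) t)
    (hP2 : ∀ t, 0 ≤ t →
      HasDerivAt P2 (A5 * S t * P2 t - A6 * P1 t * P2 t - A7 * P2 t
        + A8 * S t * P1 t * P2 t) t)
    (hpos : ∀ t, 0 ≤ t → 0 < S t ∧ 0 < P1 t ∧ 0 < P2 t)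
    (hS1 : ∀ t, 0 ≤ t → S t ≤ 1)
    (D : ℝ → ℝ)
    (hD : ∀ t, D t = S t + (A1 / A4) * P1 t + P2 t / A5) :
    (∀ φ : ℝ, 0 < φ → φ < min A3 A7 → ∀ t, 0 ≤ t →
        D t ≤ (1 + φ) ^ 2 / (4 * φ) + D 0 * Real.exp (-φ * t)) ∧
      ∃ M : ℝ, ∀ t, 0 ≤ t → D t ≤ M := by
  have hmain : ∀ φ : ℝ, 0 < φ → φ < min A3 A7 → ∀ t, 0 ≤ t →
      D t ≤ (1 + φ) ^ 2 / (4 * φ) + D 0 * Real.exp (-φ * t) := by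
    intro φ hφ hφm
    obtain ⟨hφ3, hφ7⟩ := lt_min_iff.mp hφm
    set K : ℝ := (1 + φ) ^ 2 / (4 * φ) with hK
    have hK0 : 0 ≤ K := by positivity
    have hφK : φ * K = (1 + φ) ^ 2 / 4 := by
      rw [hK]; field_simp
    -- derivative of D together with the key differential inequality
    have hkey : ∀ t, 0 ≤ t → ∃ e : ℝ, HasDerivAt D e t ∧ e + φ * D t ≤ (1 + φ) ^ 2 / 4 := by
      intro t ht
      refine ⟨(S t * (1 - S t) - S t * P1 t - S t * P2 t)
        + (A1 / A4) * (A4 * S t * P1 t / (A1 + P2 t) - A2 * P1 t * P2 t - A3 * P1 t)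
        + (A5 * S t * P2 t - A6 * P1 t * P2 t - A7 * P2 t + A8 * S t * P1 t * P2 t) / A5,
        ?_, ?_⟩
      · have hDf : D = fun u => S u + (A1 / A4) * P1 u + P2 u / A5 := funext hD
        rw [hDf]
        exact ((hS t ht).add ((hP1 t ht).const_mul (A1 / A4))).add ((hP2 t ht).div_const A5)
      · obtain ⟨hs, hp, hq⟩ := hpos t ht
        have hs1 := hS1 t ht
        have hden : 0 < A1 + P2 t := by linarith
        have hsplit : (A1 / A4) * (A4 * S t * P1 t / (A1 + P2 t) - A2 * P1 t * P2 t - A3 * P1 t)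
            = A1 * S t * P1 t / (A1 + P2 t) - (A1 * A2 / A4) * (P1 t * P2 t)
              - (A1 / A4) * (A3 * P1 t) := by
          field_simp
        have hsplit2 : (A5 * S t * P2 t - A6 * P1 t * P2 t - A7 * P2 t
              + A8 * S t * P1 t * P2 t) / A5
            = S t * P2 t - (A6 / A5) * (P1 t * P2 t) - (A7 / A5) * P2 t
              + (A8 / A5) * (S t * P1 t * P2 t) := by
          field_simp
        have h1 : A1 * S t * P1 t / (A1 + P2 t) ≤ S t * P1 t := by
          rw [div_le_iff₀ hden]
          nlinarith [mul_nonneg (mul_nonneg hs.le hp.le) hq.le]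
        have h2 : (A8 / A5) * (S t * P1 t * P2 t) ≤ (A8 / A5) * (P1 t * P2 t) := by
          have h8 : 0 ≤ A8 / A5 := by positivity
          have : S t * P1 t * P2 t ≤ P1 t * P2 t := by
            nlinarith [mul_nonneg (mul_nonneg (sub_nonneg.mpr hs1) hp.le) hq.le]
          exact mul_le_mul_of_nonneg_left this h8
        have h3 : (A8 / A5) * (P1 t * P2 t)
            ≤ (A1 * A2 / A4) * (P1 t * P2 t) + (A6 / A5) * (P1 t * P2 t) := by
          have h := mul_nonneg hsign (mul_pos hp hq).le
          have heq : (A1 * A2 / A4 + (A6 - A8) / A5) * (P1 t * P2 t)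
              = (A1 * A2 / A4) * (P1 t * P2 t) + (A6 / A5) * (P1 t * P2 t)
                - (A8 / A5) * (P1 t * P2 t) := by ring
          linarith [heq ▸ h]
        have h4 : φ * (A1 / A4 * P1 t) ≤ (A1 / A4) * (A3 * P1 t) := by
          have h : 0 ≤ (A1 * (A3 - φ) / A4) * P1 t :=
            mul_nonneg (div_nonneg (mul_nonneg hA1.le (by linarith)) hA4.le) hp.le
          have heq : (A1 * (A3 - φ) / A4) * P1 t
              = (A1 / A4) * (A3 * P1 t) - φ * (A1 / A4 * P1 t) := by ring
          linarith [heq ▸ h]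
        have h5 : φ * (P2 t / A5) ≤ (A7 / A5) * P2 t := by
          have h : 0 ≤ ((A7 - φ) / A5) * P2 t :=
            mul_nonneg (div_nonneg (by linarith) hA5.le) hq.le
          have heq : ((A7 - φ) / A5) * P2 t = (A7 / A5) * P2 t - φ * (P2 t / A5) := by ring
          linarith [heq ▸ h]
        have hsq : S t * (1 + φ - S t) ≤ (1 + φ) ^ 2 / 4 := by
          nlinarith [sq_nonneg (S t - (1 + φ) / 2)]
        rw [hD, hsplit, hsplit2]
        linarith
    -- the comparison function g is nonincreasing
    have hgderiv : ∀ t, 0 ≤ t → ∃ e' : ℝ,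
        HasDerivAt (fun u => (D u - K) * Real.exp (φ * u)) e' t ∧ e' ≤ 0 := by
      intro t ht
      obtain ⟨e, hde, hineq⟩ := hkey t ht
      refine ⟨(e + φ * (D t - K)) * Real.exp (φ * t), ?_, ?_⟩
      · have h1 : HasDerivAt (fun u => D u - K) e t := hde.sub_const K
        have h2 : HasDerivAt (fun u : ℝ => Real.exp (φ * u)) (Real.exp (φ * t) * φ) t := by
          simpa using ((hasDerivAt_id t).const_mul φ).exp
        have : HasDerivAt (fun u => (D u - K) * Real.exp (φ * u))
            (e * Real.exp (φ * t) + (D t - K) * (Real.exp (φ * t) * φ)) t := h1.mul h2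
        convert this using 1
        ring
      · have hnp : e + φ * (D t - K) ≤ 0 := by nlinarith
        exact mul_nonpos_of_nonpos_of_nonneg hnp (Real.exp_nonneg _)
    have hmono : ∀ t, 0 ≤ t →
        (D t - K) * Real.exp (φ * t) ≤ (D 0 - K) * Real.exp (φ * 0) := by
      intro t ht
      have hanti : AntitoneOn (fun u => (D u - K) * Real.exp (φ * u)) (Set.Ici (0 : ℝ)) := by
        apply antitoneOn_of_deriv_nonpos (convex_Ici 0)
        · intro x hx
          obtain ⟨e', hd, _⟩ := hgderiv x hx
          exact hd.continuousAt.continuousWithinAt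
        · intro x hx
          rw [interior_Ici] at hx
          obtain ⟨e', hd, _⟩ := hgderiv x (le_of_lt hx)
          exact hd.differentiableAt.differentiableWithinAt
        · intro x hx
          rw [interior_Ici] at hx
          obtain ⟨e', hd, hnp⟩ := hgderiv x (le_of_lt hx)
          rw [hd.deriv]
          exact hnp
      exact hanti Set.self_mem_Ici ht ht
    intro t ht
    have h := hmono t ht
    rw [mul_zero, Real.exp_zero, mul_one] at h
    have hexp : 0 < Real.exp (φ * t) := Real.exp_pos _
    have hDt : D t - K ≤ (D 0 - K) * Real.exp (-φ * t) := by
      rw [neg_mul, Real.exp_neg, ← div_eq_mul_inv, le_div_iff₀ hexp]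
      exact h
    have hstep : (D 0 - K) * Real.exp (-φ * t) ≤ D 0 * Real.exp (-φ * t) := by
      nlinarith [Real.exp_pos (-φ * t)]
    linarith
  refine ⟨hmain, ?_⟩
  set φ0 : ℝ := min A3 A7 / 2 with hφ0
  have hm : 0 < min A3 A7 := lt_min hA3 hA7
  have hφ0pos : 0 < φ0 := by positivity
  have hφ0lt : φ0 < min A3 A7 := by rw [hφ0]; linarith
  refine ⟨(1 + φ0) ^ 2 / (4 * φ0) + D 0, ?_⟩
  intro t ht
  have h := hmain φ0 hφ0pos hφ0lt t ht
  have hD0 : 0 < D 0 := by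
    obtain ⟨hs, hp, hq⟩ := hpos 0 le_rfl
    rw [hD]
    positivity
  have hexp1 : Real.exp (-φ0 * t) ≤ 1 := by
    apply Real.exp_le_one_iff.mpr
    nlinarith
  nlinarith [Real.exp_pos (-φ0 * t)]
end

section
/- Let A1,…,A8 be positive reals and let (S, P1, P2) with S > 0, P1 > 0, P2 > 0 be an interior equilibrium of system (3), i.e. (1−S) − P1 − P2 = 0, A4·S/(A1+P2) − A2·P2 − A3 = 0, and A5·S − A6·P1 − A7 + A8·P1·S = 0. Then S is a root of the quartic γ1·S⁴ + γ2·S³ + γ3·S² + γ4·S + γ5 = 0, where γ1 = 4A2²A8², γ2 = −4A2A8(2A2(A5+A6) + ((2+A1)A2 + A3 + A4)A8), γ3 = 4A2(A2(A5+A6)² + (A3A5 + 2(A3+A4)A6 + (2+A1)A2(A5+2A6) + 2A2A7)A8 + (1+A1)(A2+A3)A8²), γ4 = −4A2(A4A6² + A3A6(A5+A6) + A2(A5+A6)((2+A1)A6 + 2A7) + A3(2(1+A1)A6 + A7)A8 + A2(2(1+A1)A6 + (2+A1)A7)A8), and γ5 = 4A2(A6 + A1A6 + A7)(A3A6 + A2(A6+A7)).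 -/
/-- The prey coordinate `S` of an interior equilibrium of system (3) is a
root of an explicit quartic polynomial. -/
theorem interior_equilibrium_quartic
    (A1 A2 A3 A4 A5 A6 A7 A8 : ℝ)
    (hA1 : 0 < A1) (hA2 : 0 < A2) (hA3 : 0 < A3) (hA4 : 0 < A4)
    (hA5 : 0 < A5) (hA6 : 0 < A6) (hA7 : 0 < A7) (hA8 : 0 < A8)
    (S P1 P2 : ℝ) (hS : 0 < S) (hP1 : 0 < P1) (hP2 : 0 < P2)
    (hnull1 : (1 - S) - P1 - P2 = 0)
    (hnull2 : A4 * S / (A1 + P2) - A2 * P2 - A3 = 0)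
    (hnull3 : A5 * S - A6 * P1 - A7 + A8 * P1 * S = 0) :
    (4 * A2 ^ 2 * A8 ^ 2) * S ^ 4
      + (-(4 * A2 * A8 * (2 * A2 * (A5 + A6) + ((2 + A1) * A2 + A3 + A4) * A8))) * S ^ 3
      + (4 * A2 * (A2 * (A5 + A6) ^ 2
          + (A3 * A5 + 2 * (A3 + A4) * A6 + (2 + A1) * A2 * (A5 + 2 * A6)
              + 2 * A2 * A7) * A8
          + (1 + A1) * (A2 + A3) * A8 ^ 2)) * S ^ 2
      + (-(4 * A2 * (A4 * A6 ^ 2 + A3 * A6 * (A5 + A6)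
          + A2 * (A5 + A6) * ((2 + A1) * A6 + 2 * A7)
          + A3 * (2 * (1 + A1) * A6 + A7) * A8
          + A2 * (2 * (1 + A1) * A6 + (2 + A1) * A7) * A8))) * S
      + 4 * A2 * (A6 + A1 * A6 + A7) * (A3 * A6 + A2 * (A6 + A7)) = 0 := by

  have hden : A1 + P2 ≠ 0 := by positivity
  have hE2 : (A2 * P2 + A3) * (A1 + P2) - A4 * S = 0 := by
    field_simp at hnull2
    linarith [hnull2]
  have hP1' : P1 = 1 - S - P2 := by linarith
  subst hP1'
  linear_combination (4 * A2 * (A6 - A8 * S)^2) * hE2 -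
    (4 * A2 * (A2 * (A6 - A8 * S) * P2 + (A1 * A2 + A3) * (A6 - A8 * S)
      - A2 * (A5 * S + A6 * S - A6 - A7 + A8 * S - A8 * S^2))) * hnull3
end

section
/- Let A1,…,A8 be positive reals. The characteristic polynomial of the Jacobian matrix J(1,0,0) of system (3) at the predator-free equilibrium E1 = (1,0,0) factors as (x+1)·(x − (A4−A1·A3)/A1)·(x − (A5−A7)); hence its eigenvalues are −1, (A4−A1·A3)/A1 and A5−A7, and if A1·A3 > A4 and A7 > A5 then all three eigenvalues of J(1,0,0) are negative. -/
open Polynomial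

/-- The Jacobian matrix of system (3) at the point `(S, P1, P2)`. -/
noncomputable def jacobian3 (A1 A2 A3 A4 A5 A6 A7 A8 S P1 P2 : ℝ) :
    Matrix (Fin 3) (Fin 3) ℝ :=
  !![1 - 2 * S - P1 - P2, -S, -S;
     A4 * P1 / (A1 + P2), A4 * S / (A1 + P2) - A2 * P2 - A3,
       -(A4 * S * P1 / (A1 + P2) ^ 2) - A2 * P1;
     A5 * P2 + A8 * P1 * P2, -(A6 * P2) + A8 * P2 * S,
       A5 * S - A6 * P1 - A7 + A8 * P1 * S]

/-- The characteristic polynomial of the Jacobian of system (3) at the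
predator-free equilibrium `E1 = (1,0,0)` factors as
`(x+1)(x − (A4−A1·A3)/A1)(x − (A5−A7))`; hence its eigenvalues are
`−1`, `(A4−A1·A3)/A1` and `A5−A7`, and if `A1·A3 > A4` and `A7 > A5` then
all three eigenvalues are negative. -/
theorem E1_jacobian_charpoly
    (A1 A2 A3 A4 A5 A6 A7 A8 : ℝ)
    (hA1 : 0 < A1) (hA2 : 0 < A2) (hA3 : 0 < A3) (hA4 : 0 < A4)
    (hA5 : 0 < A5) (hA6 : 0 < A6) (hA7 : 0 < A7) (hA8 : 0 < A8) :
    (jacobian3 A1 A2 A3 A4 A5 A6 A7 A8 1 0 0).charpoly =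
        (X + C (1 : ℝ)) * (X - C ((A4 - A1 * A3) / A1)) * (X - C (A5 - A7)) ∧
      (jacobian3 A1 A2 A3 A4 A5 A6 A7 A8 1 0 0).charpoly.roots =
        {-1, (A4 - A1 * A3) / A1, A5 - A7} ∧
      (A1 * A3 > A4 → A7 > A5 →
        ∀ x ∈ (jacobian3 A1 A2 A3 A4 A5 A6 A7 A8 1 0 0).charpoly.roots,
          x < 0) := by
  have hcp : (jacobian3 A1 A2 A3 A4 A5 A6 A7 A8 1 0 0).charpoly =
      (X + C (1 : ℝ)) * (X - C ((A4 - A1 * A3) / A1)) * (X - C (A5 - A7)) := by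
    have hM : jacobian3 A1 A2 A3 A4 A5 A6 A7 A8 1 0 0 =
        !![-1, -1, -1; 0, (A4 - A1 * A3) / A1, 0; 0, 0, A5 - A7] := by
      have h0 : (A4 - A1 * A3) / A1 = A4 * 1 / (A1 + 0) - A2 * 0 - A3 := by
        field_simp
        ring
      ext i j
      fin_cases i <;> fin_cases j <;> simp [jacobian3, h0] <;> ring
    rw [hM, Matrix.charpoly, Matrix.det_fin_three]
    simp [Matrix.charmatrix_apply, Matrix.vecHead, Matrix.vecTail]
  have hroots : (jacobian3 A1 A2 A3 A4 A5 A6 A7 A8 1 0 0).charpoly.roots =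
      {-1, (A4 - A1 * A3) / A1, A5 - A7} := by
    rw [hcp]
    have h1 : (X + C (1 : ℝ)) = X - C (-1) := by simp
    rw [h1, roots_mul (mul_ne_zero (mul_ne_zero (X_sub_C_ne_zero _)
        (X_sub_C_ne_zero _)) (X_sub_C_ne_zero _)),
      roots_mul (mul_ne_zero (X_sub_C_ne_zero _) (X_sub_C_ne_zero _)),
      roots_X_sub_C, roots_X_sub_C, roots_X_sub_C]
    rfl
  refine ⟨hcp, hroots, ?_⟩
  intro h1 h2 x hx
  rw [hroots] at hx
  simp only [Multiset.insert_eq_cons, Multiset.mem_cons, Multiset.mem_singleton] at hx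
  rcases hx with rfl | rfl | rfl
  · norm_num
  · exact div_neg_of_neg_of_pos (by linarith) hA1
  · linarith
end

section
/- Let A1,…,A8 be positive reals satisfying A1·A3 < A4, A5 > (A4·A6 − A1·A3·A6)/(A1·A3), A8 < (A1·A3·A4·A5 + A1·A3·A4·A6 − A4²·A6 − A4²·A7)/(A1²·A3² − A1·A3·A4), and A7 > (A1·A3·A5 + A1·A3·A6 − A4·A6)/A4. Let B1 = A1·A3/A4, C1 = (A4 − A1·A3)/A4, and let J(B1, C1, 0) be the Jacobian matrix of system (3) at the second-predator-free equilibrium E2 = (B1, C1, 0). Then every complex root z of the characteristic polynomial of J(B1, C1, 0) satisfies Re z < 0. -/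
open Polynomial

/-- Auxiliary: evaluation of the characteristic polynomial of a real `3 × 3`
matrix at a complex number, written out by cofactor expansion. -/
theorem aeval_charpoly_fin3 (M : Matrix (Fin 3) (Fin 3) ℝ) (z : ℂ) :
    Polynomial.aeval z M.charpoly =
      (z - M 0 0) * (z - M 1 1) * (z - M 2 2)
      - (z - M 0 0) * (-(M 1 2 : ℂ)) * (-(M 2 1 : ℂ))
      - (-(M 0 1 : ℂ)) * (-(M 1 0 : ℂ)) * (z - M 2 2)
      + (-(M 0 1 : ℂ)) * (-(M 1 2 : ℂ)) * (-(M 2 0 : ℂ))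
      + (-(M 0 2 : ℂ)) * (-(M 1 0 : ℂ)) * (-(M 2 1 : ℂ))
      - (-(M 0 2 : ℂ)) * (z - M 1 1) * (-(M 2 0 : ℂ)) := by
  rw [Matrix.charpoly, AlgHom.map_det, Matrix.det_fin_three]
  simp [Matrix.charmatrix_apply, Matrix.diagonal_apply, Fin.ext_iff]

set_option maxHeartbeats 1000000 in
/-- Local asymptotic stability of the second-predator-free equilibrium
`E2 = (B1, C1, 0)` of system (3): under the stated parametric conditions
every complex root of the characteristic polynomial of the Jacobian at `E2`
has negative real part. -/
theorem E2_locally_asymptotically_stable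
    (A1 A2 A3 A4 A5 A6 A7 A8 : ℝ)
    (hA1 : 0 < A1) (hA2 : 0 < A2) (hA3 : 0 < A3) (hA4 : 0 < A4)
    (hA5 : 0 < A5) (hA6 : 0 < A6) (hA7 : 0 < A7) (hA8 : 0 < A8)
    (h1 : A1 * A3 < A4)
    (h2 : A5 > (A4 * A6 - A1 * A3 * A6) / (A1 * A3))
    (h3 : A8 < (A1 * A3 * A4 * A5 + A1 * A3 * A4 * A6 - A4 ^ 2 * A6 - A4 ^ 2 * A7)
        / (A1 ^ 2 * A3 ^ 2 - A1 * A3 * A4))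
    (h4 : A7 > (A1 * A3 * A5 + A1 * A3 * A6 - A4 * A6) / A4)
    (B1 C1 : ℝ) (hB1 : B1 = A1 * A3 / A4) (hC1 : C1 = (A4 - A1 * A3) / A4) :
    ∀ z : ℂ,
      Polynomial.aeval z
          (jacobian3 A1 A2 A3 A4 A5 A6 A7 A8 B1 C1 0).charpoly = 0 →
      z.re < 0 := by
  intro z hz
  have hB1pos : 0 < B1 := by rw [hB1]; positivity
  have hC1pos : 0 < C1 := by rw [hC1]; exact div_pos (by linarith) hA4
  set g : ℝ := A5 * B1 - A6 * C1 - A7 + A8 * C1 * B1 with hgdef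
  set c : ℝ := A4 * C1 / (A1 + 0) * B1 with hcdef
  have hcpos : 0 < c := by
    rw [hcdef]
    have : (0:ℝ) < A1 + 0 := by linarith
    positivity
  have hg : g < 0 := by
    have hD : A1 ^ 2 * A3 ^ 2 - A1 * A3 * A4 < 0 := by
      nlinarith [mul_pos (mul_pos hA1 hA3) (sub_pos.mpr h1)]
    have h3' : A1 * A3 * A4 * A5 + A1 * A3 * A4 * A6 - A4 ^ 2 * A6 - A4 ^ 2 * A7
        < A8 * (A1 ^ 2 * A3 ^ 2 - A1 * A3 * A4) := (lt_div_iff_of_neg hD).mp h3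
    have hgA4 : g * A4 ^ 2 = A1 * A3 * A4 * A5 - A6 * (A4 - A1 * A3) * A4 - A7 * A4 ^ 2
        + A8 * (A4 - A1 * A3) * (A1 * A3) := by
      rw [hgdef, hB1, hC1]; field_simp
    nlinarith [sq_nonneg A4]
  rw [aeval_charpoly_fin3] at hz
  have hz' : (z - ((1 - 2 * B1 - C1 - 0 : ℝ) : ℂ))
        * (z - ((A4 * B1 / (A1 + 0) - A2 * 0 - A3 : ℝ) : ℂ))
        * (z - ((A5 * B1 - A6 * C1 - A7 + A8 * C1 * B1 : ℝ) : ℂ))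
      - (z - ((1 - 2 * B1 - C1 - 0 : ℝ) : ℂ))
        * (-((-(A4 * B1 * C1 / (A1 + 0) ^ 2) - A2 * C1 : ℝ) : ℂ))
        * (-((-(A6 * 0) + A8 * 0 * B1 : ℝ) : ℂ))
      - (-((-B1 : ℝ) : ℂ)) * (-((A4 * C1 / (A1 + 0) : ℝ) : ℂ))
        * (z - ((A5 * B1 - A6 * C1 - A7 + A8 * C1 * B1 : ℝ) : ℂ))
      + (-((-B1 : ℝ) : ℂ)) * (-((-(A4 * B1 * C1 / (A1 + 0) ^ 2) - A2 * C1 : ℝ) : ℂ))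
        * (-((A5 * 0 + A8 * C1 * 0 : ℝ) : ℂ))
      + (-((-B1 : ℝ) : ℂ)) * (-((A4 * C1 / (A1 + 0) : ℝ) : ℂ))
        * (-((-(A6 * 0) + A8 * 0 * B1 : ℝ) : ℂ))
      - (-((-B1 : ℝ) : ℂ)) * (z - ((A4 * B1 / (A1 + 0) - A2 * 0 - A3 : ℝ) : ℂ))
        * (-((A5 * 0 + A8 * C1 * 0 : ℝ) : ℂ)) = 0 := hz
  have h00 : (1 - 2 * B1 - C1 - 0 : ℝ) = -B1 := by rw [hB1, hC1]; field_simp; ring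
  have h11 : (A4 * B1 / (A1 + 0) - A2 * 0 - A3 : ℝ) = 0 := by
    rw [hB1]; field_simp; ring
  have h20 : (A5 * 0 + A8 * C1 * 0 : ℝ) = 0 := by ring
  have h21 : (-(A6 * 0) + A8 * 0 * B1 : ℝ) = 0 := by ring
  rw [h00, h11, h20, h21] at hz'
  have key : (z - (g : ℂ)) * (z ^ 2 + (B1 : ℂ) * z + (c : ℂ)) = 0 := by
    rw [← hz', hgdef, hcdef]
    push_cast
    ring
  rcases mul_eq_zero.mp key with h | h
  · have : z = (g : ℂ) := by linear_combination h
    rw [this]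
    simpa using hg
  · have hre : z.re ^ 2 - z.im ^ 2 + B1 * z.re + c = 0 := by
      have := congrArg Complex.re h
      simpa [pow_two, Complex.mul_re, Complex.mul_im] using this
    have him0 : (z ^ 2 + (B1 : ℂ) * z + (c : ℂ)).im = 0 := by rw [h]; rfl
    have him : z.im * (2 * z.re + B1) = 0 := by
      simp [pow_two, Complex.add_im, Complex.mul_re, Complex.mul_im] at him0
      nlinarith [him0]
    rcases mul_eq_zero.mp him with hy | hx
    · by_contra hxn
      push_neg at hxn
      nlinarith [hre, hy]
    · linarith
end

section
/- Let A1,…,A8 be positive reals satisfying A5 > A7 and A4 ≤ (A2·A5² − 2·A2·A5·A7 + A2·A7² + A3·A5² − A3·A5·A7)/(A5·A7). Let B2 = A7/A5, D1 = (A5 − A7)/A5, and let J(B2, 0, D1) be the Jacobian matrix of system (3) at the first-predator-free equilibrium E3 = (B2, 0, D1). Then every complex root z of the characteristic polynomial of J(B2, 0, D1) satisfies Re z < 0. -/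
open Polynomial

lemma quad_root_re_neg (b q : ℝ) (hb : 0 < b) (hq : 0 < q) (z : ℂ)
    (h : z ^ 2 + (b : ℂ) * z + (q : ℂ) = 0) : z.re < 0 := by
  have hre := congrArg Complex.re h
  have him := congrArg Complex.im h
  simp [pow_two, Complex.add_re, Complex.add_im, Complex.mul_re, Complex.mul_im] at hre him
  have him' : (2 * z.re + b) * z.im = 0 := by linear_combination him
  rcases mul_eq_zero.mp him' with h' | h'
  · linarith
  · rw [h'] at hre
    nlinarith [hre]

set_option maxHeartbeats 1000000 in
/-- Local asymptotic stability of the first-predator-free equilibrium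
`E3 = (B2, 0, D1)` of system (3): under the stated parametric conditions
every complex root of the characteristic polynomial of the Jacobian at `E3`
has negative real part. -/
theorem E3_locally_asymptotically_stable
    (A1 A2 A3 A4 A5 A6 A7 A8 : ℝ)
    (hA1 : 0 < A1) (hA2 : 0 < A2) (hA3 : 0 < A3) (hA4 : 0 < A4)
    (hA5 : 0 < A5) (hA6 : 0 < A6) (hA7 : 0 < A7) (hA8 : 0 < A8)
    (h1 : A5 > A7)
    (h2 : A4 ≤ (A2 * A5 ^ 2 - 2 * A2 * A5 * A7 + A2 * A7 ^ 2 + A3 * A5 ^ 2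
        - A3 * A5 * A7) / (A5 * A7))
    (B2 D1 : ℝ) (hB2 : B2 = A7 / A5) (hD1 : D1 = (A5 - A7) / A5) :
    ∀ z : ℂ,
      Polynomial.aeval z
          (jacobian3 A1 A2 A3 A4 A5 A6 A7 A8 B2 0 D1).charpoly = 0 →
      z.re < 0 := by
  subst hB2 hD1
  intro z hz
  have hA5' : A5 ≠ 0 := ne_of_gt hA5
  have hd : (0:ℝ) < (A5 - A7) / A5 := div_pos (by linarith) hA5
  have hAd : (0:ℝ) < A1 + (A5 - A7) / A5 := by positivity
  have hb : (0:ℝ) < A7 / A5 := by positivity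
  set lam : ℝ := A4 * (A7 / A5) / (A1 + (A5 - A7) / A5) - A2 * ((A5 - A7) / A5) - A3 with hlam
  -- lam < 0
  have key : A4 * (A5 * A7) ≤ A2 * (A5 - A7) ^ 2 + A3 * A5 * (A5 - A7) := by
    rw [le_div_iff₀ (by positivity)] at h2
    nlinarith [h2]
  have hlamneg : lam < 0 := by
    have step1 : A4 * (A7 / A5) ≤ (A2 * ((A5 - A7) / A5) + A3) * ((A5 - A7) / A5) := by
      rw [show A4 * (A7 / A5) = A4 * A7 / A5 by ring,
        show (A2 * ((A5 - A7) / A5) + A3) * ((A5 - A7) / A5)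
          = (A2 * (A5 - A7) + A3 * A5) * (A5 - A7) / (A5 * A5) by field_simp; try ring,
        div_le_div_iff₀ (by positivity) (by positivity)]
      nlinarith [key]

    have step2 : (A2 * ((A5 - A7) / A5) + A3) * ((A5 - A7) / A5)
        < (A2 * ((A5 - A7) / A5) + A3) * (A1 + (A5 - A7) / A5) := by
      apply mul_lt_mul_of_pos_left (by linarith) (by positivity)
    have h3 : A4 * (A7 / A5) / (A1 + (A5 - A7) / A5) < A2 * ((A5 - A7) / A5) + A3 := by
      rw [div_lt_iff₀ hAd]
      linarith
    rw [hlam]; linarith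
  -- expand charpoly
  rw [Matrix.charpoly, Matrix.det_fin_three] at hz
  simp only [Matrix.charmatrix_apply, Matrix.diagonal_apply, Fin.isValue, Fin.reduceEq,
    if_true, if_false, reduceIte, map_add, map_mul, map_sub, map_neg, map_zero, aeval_X, aeval_C,
    jacobian3, Matrix.cons_val', Matrix.cons_val_zero, Matrix.cons_val_one, Matrix.head_cons,
    Matrix.empty_val', Matrix.cons_val_fin_one, Matrix.of_apply, Matrix.cons_val_two,
    Matrix.tail_cons, Matrix.vecHead, Complex.coe_algebraMap] at hz
  push_cast at hz
  have hA5C : (A5 : ℂ) ≠ 0 := by exact_mod_cast hA5'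
  have hAdC : (A1 : ℂ) + ((A5 : ℂ) - (A7 : ℂ)) / (A5 : ℂ) ≠ 0 := by
    rw [show (A1:ℂ) + ((A5:ℂ) - (A7:ℂ)) / (A5:ℂ) = ((A1 + (A5 - A7) / A5 : ℝ) : ℂ) by
      push_cast; ring]
    exact_mod_cast ne_of_gt hAd
  rw [show ((A5:ℂ) * ((A7:ℂ)/(A5:ℂ)) - (A6:ℂ) * 0 - (A7:ℂ) + (A8:ℂ) * 0 * ((A7:ℂ)/(A5:ℂ))) = 0 by
      field_simp; ring,
    show ((1:ℂ) - 2 * ((A7:ℂ)/(A5:ℂ)) - 0 - ((A5:ℂ) - (A7:ℂ))/(A5:ℂ)) = -((A7:ℂ)/(A5:ℂ)) by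
      field_simp; ring] at hz
  norm_num at hz
  have hfac : (z - (lam : ℂ)) *
      (z ^ 2 + ((A7 / A5 : ℝ) : ℂ) * z + ((A7 * ((A5 - A7) / A5) : ℝ) : ℂ)) = 0 := by
    rw [← hz, hlam]
    push_cast
    field_simp
  rcases mul_eq_zero.mp hfac with h' | h'
  · rw [sub_eq_zero.mp h', Complex.ofReal_re]
    exact hlamneg
  · exact quad_root_re_neg _ _ hb (mul_pos hA7 hd) z h'
end

section
/- Let A1,…,A8 be positive reals with A4 > A1·A3, let B1 = A1·A3/A4, C1 = (A4 − A1·A3)/A4, and write the characteristic polynomial of the Jacobian matrix J(B1, C1, 0) of system (3) at E2 = (B1, C1, 0) as κ³ + F1·κ² + F2·κ + F3. If F1·F2 − F3 = 0, then F2 ≤ 0; in particular F1 and F2 cannot both be positive, so the Liu criterion for a Hopf bifurcation at E2 is never satisfied (system (3) has no Hopf bifurcation at E2). -/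
open Polynomial

lemma charpoly_fin3_aux (M : Matrix (Fin 3) (Fin 3) ℝ) :
    M.charpoly = X^3
      + C (-(M 0 0 + M 1 1 + M 2 2)) * X^2
      + C (M 0 0 * M 1 1 + M 0 0 * M 2 2 + M 1 1 * M 2 2
           - M 0 1 * M 1 0 - M 0 2 * M 2 0 - M 1 2 * M 2 1) * X
      + C (-M.det) := by
  rw [Matrix.charpoly, Matrix.det_fin_three, Matrix.det_fin_three]
  simp [Matrix.charmatrix_apply, Matrix.one_apply]
  ring

/-- No Hopf bifurcation can occur at the second-predator-free equilibrium
`E2 = (B1, C1, 0)` of system (3): writing the characteristic polynomial of the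
Jacobian at `E2` as `κ³ + F1·κ² + F2·κ + F3`, the Liu condition
`F1·F2 − F3 = 0` forces `F2 ≤ 0`, so `F1, F2` cannot both be positive. -/
theorem no_Hopf_at_E2
    (A1 A2 A3 A4 A5 A6 A7 A8 : ℝ)
    (hA1 : 0 < A1) (hA2 : 0 < A2) (hA3 : 0 < A3) (hA4 : 0 < A4)
    (hA5 : 0 < A5) (hA6 : 0 < A6) (hA7 : 0 < A7) (hA8 : 0 < A8)
    (hexist : A4 > A1 * A3)
    (B1 C1 : ℝ) (hB1 : B1 = A1 * A3 / A4) (hC1 : C1 = (A4 - A1 * A3) / A4)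
    (F1 F2 F3 : ℝ)
    (hchar : (jacobian3 A1 A2 A3 A4 A5 A6 A7 A8 B1 C1 0).charpoly =
      X ^ 3 + C F1 * X ^ 2 + C F2 * X + C F3)
    (hLiu : F1 * F2 - F3 = 0) :
    F2 ≤ 0 := by
  have hA1' := hA1.ne'
  have hA4' := hA4.ne'
  set a : ℝ := A4 * C1 / A1 with ha
  set d : ℝ := A5 * B1 - A6 * C1 - A7 + A8 * C1 * B1 with hd
  set M := jacobian3 A1 A2 A3 A4 A5 A6 A7 A8 B1 C1 0 with hM
  have hM00 : M 0 0 = -B1 := by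
    simp [hM, jacobian3, hB1, hC1]; field_simp; ring
  have hM01 : M 0 1 = -B1 := by simp [hM, jacobian3]
  have hM02 : M 0 2 = -B1 := by simp [hM, jacobian3]
  have hM10 : M 1 0 = a := by simp [hM, jacobian3, ha]
  have hM11 : M 1 1 = 0 := by
    simp [hM, jacobian3, hB1]; field_simp; ring
  have hM20 : M 2 0 = 0 := by simp [hM, jacobian3]
  have hM21 : M 2 1 = 0 := by simp [hM, jacobian3]
  have hM22 : M 2 2 = d := by simp [hM, jacobian3, hd]
  have hdet : M.det = d * B1 * a := by
    rw [Matrix.det_fin_three, hM00, hM01, hM10, hM11, hM20, hM21, hM22]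
    ring
  have hcp := charpoly_fin3_aux M
  rw [hM00, hM01, hM02, hM10, hM11, hM20, hM21, hM22, hdet, hchar] at hcp
  have hF1 : F1 = -(-B1 + 0 + d) := by
    have := congrArg (fun p => Polynomial.coeff p 2) hcp
    simpa [add_mul, coeff_C_mul, coeff_X_pow, coeff_C] using this
  have hF2 : F2 = -B1 * 0 + -B1 * d + 0 * d - -B1 * a - -B1 * 0 - M 1 2 * 0 := by
    have := congrArg (fun p => Polynomial.coeff p 1) hcp
    simpa [add_mul, coeff_C_mul, coeff_X_pow, coeff_C] using this
  have hF3 : F3 = -(d * B1 * a) := by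
    have := congrArg (fun p => Polynomial.coeff p 0) hcp
    simpa [add_mul, coeff_C_mul, coeff_X_pow, coeff_C] using this
  have hB1pos : 0 < B1 := by rw [hB1]; positivity
  have hkey : B1 * (a * B1 - d * B1 + d ^ 2) = 0 := by
    rw [hF1, hF2, hF3] at hLiu; ring_nf at hLiu ⊢; linarith [hLiu]
  have h2 : a * B1 - d * B1 + d ^ 2 = 0 := by
    rcases mul_eq_zero.mp hkey with h | h
    · exact absurd h hB1pos.ne'
    · exact h
  rw [hF2]
  nlinarith [sq_nonneg d]
end

section
/- Let a* ∈ ℝ, let G1, G2, G3 : ℝ → ℝ be differentiable at a* with G2(a*) > 0 and G1(a*)·G2(a*) − G3(a*) = 0, and let λ : ℝ → ℂ be differentiable at a* with λ(a*) = i·√(G2(a*)) and satisfying λ(a)³ + G1(a)·λ(a)² + G2(a)·λ(a) + G3(a) = 0 for all a in some neighborhood of a*. Then Re(λ'(a*)) = −(G1'(a*)·G2(a*) − G3'(a*) + G1(a*)·G2'(a*)) / (2·(G2(a*) + G1(a*)²)). In particular, Re(λ'(a*)) ≠ 0 if and only if the transversality quantity G1'(a*)·G2(a*) − G3'(a*)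 + G1(a*)·G2'(a*) is nonzero. -/
/-- Transversality formula for the Hopf bifurcation at the interior
equilibrium: if `μ(a)` is a differentiable branch of eigenvalues with
`μ(a*) = i√(G2(a*))` satisfying the characteristic equation near `a*`, then
`Re μ'(a*) = −(G1'·G2 − G3' + G1·G2')/(2(G2 + G1²))` at `a*`; in particular
`Re μ'(a*) ≠ 0` iff the transversality quantity is nonzero. -/
theorem hopf_transversality
    (astar : ℝ) (G1 G2 G3 : ℝ → ℝ) (g1' g2' g3' : ℝ)
    (hG1 : HasDerivAt G1 g1' astar)
    (hG2 : HasDerivAt G2 g2' astar)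
    (hG3 : HasDerivAt G3 g3' astar)
    (hG2pos : 0 < G2 astar)
    (hRH : G1 astar * G2 astar - G3 astar = 0)
    (μ : ℝ → ℂ) (μ' : ℂ)
    (hμ : HasDerivAt μ μ' astar)
    (hμstar : μ astar = Complex.I * (Real.sqrt (G2 astar) : ℂ))
    (hchar : ∀ᶠ a in nhds astar,
      μ a ^ 3 + (G1 a : ℂ) * μ a ^ 2 + (G2 a : ℂ) * μ a + (G3 a : ℂ) = 0) :
    μ'.re = -((g1' * G2 astar - g3' + G1 astar * g2') /
        (2 * (G2 astar + (G1 astar) ^ 2))) ∧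
      (μ'.re ≠ 0 ↔ g1' * G2 astar - g3' + G1 astar * g2' ≠ 0) := by
  set s : ℝ := Real.sqrt (G2 astar) with hs
  have hs2 : s ^ 2 = G2 astar := Real.sq_sqrt hG2pos.le
  have hspos : 0 < s := Real.sqrt_pos.mpr hG2pos
  have hG1c : HasDerivAt (fun a => ((G1 a : ℝ) : ℂ)) (g1' : ℂ) astar := hG1.ofReal_comp
  have hG2c : HasDerivAt (fun a => ((G2 a : ℝ) : ℂ)) (g2' : ℂ) astar := hG2.ofReal_comp
  have hG3c : HasDerivAt (fun a => ((G3 a : ℝ) : ℂ)) (g3' : ℂ) astar := hG3.ofReal_comp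
  have hμ2 : HasDerivAt (fun a => μ a * μ a) (μ' * μ astar + μ astar * μ') astar :=
    hμ.mul hμ
  have hμ3 : HasDerivAt (fun a => μ a * μ a * μ a)
      ((μ' * μ astar + μ astar * μ') * μ astar + μ astar * μ astar * μ') astar :=
    hμ2.mul hμ
  have hF : HasDerivAt
      (fun a => μ a ^ 3 + (G1 a : ℂ) * μ a ^ 2 + (G2 a : ℂ) * μ a + (G3 a : ℂ))
      (((μ' * μ astar + μ astar * μ') * μ astar + μ astar * μ astar * μ') +
        ((g1' : ℂ) * (μ astar * μ astar) + (G1 astar : ℂ) * (μ' * μ astar + μ astar * μ')) +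
        ((g2' : ℂ) * μ astar + (G2 astar : ℂ) * μ') + (g3' : ℂ)) astar := by
    have := ((hμ3.add (hG1c.mul hμ2)).add (hG2c.mul hμ)).add hG3c
    refine this.congr_of_eventuallyEq (Filter.Eventually.of_forall fun a => ?_)
    simp only [Pi.add_apply, Pi.mul_apply]
    ring
  have hzero : HasDerivAt (fun _ : ℝ => (0 : ℂ))
      (((μ' * μ astar + μ astar * μ') * μ astar + μ astar * μ astar * μ') +
        ((g1' : ℂ) * (μ astar * μ astar) + (G1 astar : ℂ) * (μ' * μ astar + μ astar * μ')) +
        ((g2' : ℂ) * μ astar + (G2 astar : ℂ) * μ') + (g3' : ℂ)) astar :=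
    hF.congr_of_eventuallyEq (hchar.mono fun a ha => ha.symm)
  have hD : (((μ' * μ astar + μ astar * μ') * μ astar + μ astar * μ astar * μ') +
        ((g1' : ℂ) * (μ astar * μ astar) + (G1 astar : ℂ) * (μ' * μ astar + μ astar * μ')) +
        ((g2' : ℂ) * μ astar + (G2 astar : ℂ) * μ') + (g3' : ℂ)) = 0 :=
    hzero.unique (hasDerivAt_const _ _)
  rw [hμstar] at hD
  -- extract real and imaginary parts
  have hG2s : (G2 astar : ℂ) = (s : ℂ) ^ 2 := by
    norm_cast; exact hs2.symm
  rw [hG2s] at hD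
  have hRe : -2 * s ^ 2 * μ'.re - 2 * G1 astar * s * μ'.im - g1' * s ^ 2 + g3' = 0 := by
    have := congrArg Complex.re hD
    simp [Complex.add_re, Complex.mul_re, Complex.mul_im, Complex.I_re, Complex.I_im,
      Complex.ofReal_re, Complex.ofReal_im, pow_succ, pow_zero] at this
    ring_nf at this ⊢
    linarith [this]
  have hIm : 2 * G1 astar * s * μ'.re - 2 * s ^ 2 * μ'.im + g2' * s = 0 := by
    have := congrArg Complex.im hD
    simp [Complex.add_im, Complex.mul_re, Complex.mul_im, Complex.I_re, Complex.I_im,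
      Complex.ofReal_re, Complex.ofReal_im, pow_succ, pow_zero] at this
    ring_nf at this ⊢
    linarith [this]
  have hden : 0 < 2 * (G2 astar + G1 astar ^ 2) := by positivity
  have hkey : μ'.re = -((g1' * G2 astar - g3' + G1 astar * g2') /
      (2 * (G2 astar + G1 astar ^ 2))) := by
    rw [← hs2]
    have hs0 : s ≠ 0 := hspos.ne'
    field_simp
    have : s * (μ'.re * (2 * (s ^ 2 + G1 astar ^ 2)) +
        (g1' * s ^ 2 - g3' + G1 astar * g2')) = 0 := by
      linear_combination (-s) * hRe + (G1 astar) * hIm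
    have h2 := mul_eq_zero.mp this
    rcases h2 with h | h
    · exact absurd h hs0
    · linarith
  refine ⟨hkey, ?_⟩
  rw [hkey]
  constructor
  · intro h hq
    apply h
    rw [hq]
    simp
  · intro hq h
    apply hq
    have := neg_eq_zero.mp h
    exact (div_eq_zero_iff.mp this).resolve_right hden.ne'
end

section
/- Let A1,…,A8 be positive reals with A5 = A7, let F denote the right-hand side vector field of system (3) (regarded also as a function of the parameter A5), let J = J(1,0,0) be its Jacobian matrix at E1 = (1,0,0), and set v = (−1, 0, 1), w = (0, 0, 1). Then: (i) F(1,0,0) = 0; (ii) J·v = 0 and Jᵀ·w = 0; (iii) the partial derivative of F with respect to the parameter A5, namely K(S,P1,P2) = (0, 0, S·P2), vanishes at (1,0,0), so w·K(1,0,0) = 0; (iv) w·(DK(1,0,0)·v) = 1 ≠ 0, where DK(1,0,0) is the Jacobian matrix of K at (1,0,0); and (v) the second directional derivative of the third component F₃(S,P1,P2) = A5·S·P2 − A6·P1·P2 − A7·P2 + A8·S·P1·P2 at (1,0,0) along v satisfies vᵀ·(Hess F₃)(1,0,0)·v = −2·A5 ≠ 0. These are the Sotomayor conditions for a transcritical bifurcation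 of system (3) at E1 at the critical value A5 = A7. -/
open Matrix

/-- The right-hand side vector field of system (3). -/
noncomputable def vecField3 (A1 A2 A3 A4 A5 A6 A7 A8 S P1 P2 : ℝ) :
    Fin 3 → ℝ :=
  ![S * (1 - S) - S * P1 - S * P2,
    A4 * S * P1 / (A1 + P2) - A2 * P1 * P2 - A3 * P1,
    A5 * S * P2 - A6 * P1 * P2 - A7 * P2 + A8 * S * P1 * P2]

/-- The partial derivative of the vector field with respect to the
parameter `A5`: `K(S,P1,P2) = (0, 0, S·P2)`. -/
def Kfield (S P1 P2 : ℝ) : Fin 3 → ℝ := ![0, 0, S * P2]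

/-- The Jacobian matrix of `K` at `(S, P1, P2)`. -/
def KJac (S P1 P2 : ℝ) : Matrix (Fin 3) (Fin 3) ℝ :=
  !![0, 0, 0;
     0, 0, 0;
     P2, 0, S]

/-- The Hessian matrix of the third component
`F₃(S,P1,P2) = A5·S·P2 − A6·P1·P2 − A7·P2 + A8·S·P1·P2` of the vector field
of system (3) at `(S, P1, P2)`. -/
def hessF3 (A5 A6 A8 S P1 P2 : ℝ) : Matrix (Fin 3) (Fin 3) ℝ :=
  !![0, A8 * P2, A5 + A8 * P1;
     A8 * P2, 0, -A6 + A8 * S;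
     A5 + A8 * P1, -A6 + A8 * S, 0]

/-- Sotomayor conditions for a transcritical bifurcation of system (3) at the
predator-free equilibrium `E1 = (1,0,0)` at the critical value `A5 = A7`,
with null eigenvectors `v = (−1,0,1)` and `w = (0,0,1)`. -/
theorem transcritical_at_E1
    (A1 A2 A3 A4 A5 A6 A7 A8 : ℝ)
    (hA1 : 0 < A1) (hA2 : 0 < A2) (hA3 : 0 < A3) (hA4 : 0 < A4)
    (hA5 : 0 < A5) (hA6 : 0 < A6) (hA7 : 0 < A7) (hA8 : 0 < A8)
    (hcrit : A5 = A7)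
    (v w : Fin 3 → ℝ) (hv : v = ![-1, 0, 1]) (hw : w = ![0, 0, 1]) :
    -- (i) E1 is an equilibrium
    vecField3 A1 A2 A3 A4 A5 A6 A7 A8 1 0 0 = 0 ∧
    -- (ii) v and w are right and left null eigenvectors of the Jacobian
    (jacobian3 A1 A2 A3 A4 A5 A6 A7 A8 1 0 0).mulVec v = 0 ∧
    (jacobian3 A1 A2 A3 A4 A5 A6 A7 A8 1 0 0)ᵀ.mulVec w = 0 ∧
    -- (iii) the parameter-derivative K vanishes at E1
    Kfield 1 0 0 = 0 ∧ w ⬝ᵥ Kfield 1 0 0 = 0 ∧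
    -- (iv) first Sotomayor nondegeneracy condition
    (w ⬝ᵥ (KJac 1 0 0).mulVec v = 1 ∧ (1 : ℝ) ≠ 0) ∧
    -- (v) second Sotomayor nondegeneracy condition
    (v ⬝ᵥ (hessF3 A5 A6 A8 1 0 0).mulVec v = -2 * A5 ∧ -2 * A5 ≠ 0) := by
  subst hv hw hcrit
  refine ⟨?_, ?_, ?_, ?_, ?_, ⟨?_, one_ne_zero⟩, ?_, by nlinarith⟩ <;>
  · first
    | (funext i; fin_cases i <;>
        simp [vecField3, jacobian3, Kfield, KJac, hessF3, Matrix.mulVec,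
          dotProduct, Fin.sum_univ_three, Matrix.vecHead, Matrix.vecTail] <;>
        try ring)
    | (simp [vecField3, jacobian3, Kfield, KJac, hessF3, Matrix.mulVec,
        dotProduct, Fin.sum_univ_three]; try ring)
end

section
/- Let A1,…,A8 and L1, L2, L3 be positive reals, and let ρ1, ρ2, ϱ1, ϱ2, Γ1, Γ2 be positive reals. Suppose A4·L2·ϱ2·ρ2 < A1·Γ1·(A2·L2·ϱ1 + A7·L3) and L1·(ϱ2 + Γ2) + L3·(A5 + A8·ϱ2)·Γ2·ρ2 < A3·L2·ϱ1. Then for all reals S, P1, P2 with ρ1 ≤ S ≤ ρ2, ϱ1 ≤ P1 ≤ ϱ2 and Γ1 ≤ P2 ≤ Γ2, the quantity Υ1 := L1·P1 − A3·L2·P1 + L1·P2 − A7·L3·P2 − A2·L2·P1·P2 − A6·L3·P1·P2 − L1·P1·S − L1·P2·S + A5·L3·P2·S + A8·L3·P1·P2·S + A4·L2·P1·S/(A1 + P2) is strictly negative. -/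
/-- Negativity of the orbital derivative bound `Υ1` of the Lyapunov function
for the global stability of the axial equilibrium `E1 = (1,0,0)` of
system (3), under the stated sufficient conditions on the solution box. -/
theorem lyapunov_bound_negative
    (A1 A2 A3 A4 A5 A6 A7 A8 L1 L2 L3 : ℝ)
    (hA1 : 0 < A1) (hA2 : 0 < A2) (hA3 : 0 < A3) (hA4 : 0 < A4)
    (hA5 : 0 < A5) (hA6 : 0 < A6) (hA7 : 0 < A7) (hA8 : 0 < A8)
    (hL1 : 0 < L1) (hL2 : 0 < L2) (hL3 : 0 < L3)
    (ρ1 ρ2 ϱ1 ϱ2 Γ1 Γ2 : ℝ)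
    (hρ1 : 0 < ρ1) (hρ2 : 0 < ρ2) (hϱ1 : 0 < ϱ1) (hϱ2 : 0 < ϱ2)
    (hΓ1 : 0 < Γ1) (hΓ2 : 0 < Γ2)
    (hcond1 : A4 * L2 * ϱ2 * ρ2 < A1 * Γ1 * (A2 * L2 * ϱ1 + A7 * L3))
    (hcond2 : L1 * (ϱ2 + Γ2) + L3 * (A5 + A8 * ϱ2) * Γ2 * ρ2 < A3 * L2 * ϱ1) :
    ∀ S P1 P2 : ℝ,
      ρ1 ≤ S → S ≤ ρ2 → ϱ1 ≤ P1 → P1 ≤ ϱ2 → Γ1 ≤ P2 → P2 ≤ Γ2 →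
      L1 * P1 - A3 * L2 * P1 + L1 * P2 - A7 * L3 * P2
        - A2 * L2 * P1 * P2 - A6 * L3 * P1 * P2
        - L1 * P1 * S - L1 * P2 * S + A5 * L3 * P2 * S
        + A8 * L3 * P1 * P2 * S + A4 * L2 * P1 * S / (A1 + P2) < 0 := by
  intro S P1 P2 hS1 hS2 hP11 hP12 hP21 hP22
  have hS : 0 < S := lt_of_lt_of_le hρ1 hS1
  have hP1 : 0 < P1 := lt_of_lt_of_le hϱ1 hP11
  have hP2 : 0 < P2 := lt_of_lt_of_le hΓ1 hP21
  have hA1P2 : 0 < A1 + P2 := by linarith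
  have hPS : P1 * S ≤ ϱ2 * ρ2 := mul_le_mul hP12 hS2 hS.le hϱ2.le
  have hP2S : P2 * S ≤ Γ2 * ρ2 := mul_le_mul hP22 hS2 hS.le hΓ2.le
  have hPPS : P1 * (P2 * S) ≤ ϱ2 * (Γ2 * ρ2) :=
    mul_le_mul hP12 hP2S (by positivity) hϱ2.le
  have hdiv : A4 * L2 * P1 * S / (A1 + P2) < A7 * L3 * P2 + A2 * L2 * P1 * P2 := by
    rw [div_lt_iff₀ hA1P2]
    have h1 : A4 * L2 * P1 * S ≤ A4 * L2 * ϱ2 * ρ2 := by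
      linarith [mul_nonneg (mul_pos hA4 hL2).le (sub_nonneg.2 hPS)]
    have e1 : A7 * L3 + A2 * L2 * ϱ1 ≤ A7 * L3 + A2 * L2 * P1 := by
      linarith [mul_nonneg (mul_pos hA2 hL2).le (sub_nonneg.2 hP11)]
    have e2 : Γ1 * (A7 * L3 + A2 * L2 * ϱ1) ≤ P2 * (A7 * L3 + A2 * L2 * P1) :=
      mul_le_mul hP21 e1 (by positivity) hP2.le
    have e3 : A1 * (Γ1 * (A7 * L3 + A2 * L2 * ϱ1)) ≤ A1 * (P2 * (A7 * L3 + A2 * L2 * P1)) :=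
      mul_le_mul_of_nonneg_left e2 hA1.le
    have e4 : (0:ℝ) ≤ P2 * (A7 * L3 * P2 + A2 * L2 * P1 * P2) := by positivity
    nlinarith [e3, e4, h1]
  have hrest : L1 * P1 + L1 * P2 + A5 * L3 * P2 * S + A8 * L3 * P1 * P2 * S < A3 * L2 * P1 := by
    have k1 : L1 * P1 ≤ L1 * ϱ2 := mul_le_mul_of_nonneg_left hP12 hL1.le
    have k2 : L1 * P2 ≤ L1 * Γ2 := mul_le_mul_of_nonneg_left hP22 hL1.le
    have k3 : A5 * L3 * P2 * S ≤ A5 * L3 * Γ2 * ρ2 := by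
      linarith [mul_nonneg (mul_pos hA5 hL3).le (sub_nonneg.2 hP2S)]
    have k4 : A8 * L3 * P1 * P2 * S ≤ A8 * L3 * ϱ2 * Γ2 * ρ2 := by
      linarith [mul_nonneg (mul_pos hA8 hL3).le (sub_nonneg.2 hPPS)]
    have k5 : A3 * L2 * ϱ1 ≤ A3 * L2 * P1 := by
      linarith [mul_nonneg (mul_pos hA3 hL2).le (sub_nonneg.2 hP11)]
    have hE : L3 * (A5 + A8 * ϱ2) * Γ2 * ρ2 = A5 * L3 * Γ2 * ρ2 + A8 * L3 * ϱ2 * Γ2 * ρ2 := by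
      ring
    linarith
  have hneg : 0 ≤ A6 * L3 * P1 * P2 := by positivity
  have h6 : 0 ≤ L1 * P1 * S := by positivity
  have h7 : 0 ≤ L1 * P2 * S := by positivity
  linarith
end
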